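/- Let r > 0 and define F : ℝ³ → ℝ by F(t₁,t₂,t₃) = (1/2)t₁²t₃ + (1/2)t₁t₂² − (1/24)t₂⁴ + t₂·exp(t₃). With κ = 1, the matrix η_{αβ} = ∂³F/∂t₁∂t_α∂t_β is the constant matrix with η₁₃ = η₃₁ = 1, η₂₂ = 1 and all other entries 0, and the function G(t₁,t₂,t₃) = −(1/24)t₃ satisfies Getzler's system for F on ℝ³. Moreover ∂G/∂t₁ = 0 and E(G) = −1/16 for the Euler vector field E = t₁∂/∂t₁ + (1/2)t₂∂/∂t₂ + (3/2)∂/∂t₃. -/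

import Mathlib

open Real

/-- Partial derivative of a function of `n` real variables in the `i`-th coordinate
direction. -/
noncomputable def pd {n : ℕ} (i : Fin n) (f : (Fin n → ℝ) → ℝ) : (Fin n → ℝ) → ℝ :=
  fun t => fderiv ℝ f t (Pi.single i 1)

/-- The quantity `Σ_{α₁α₂α₃α₄} z_{α₁}z_{α₂}z_{α₃}z_{α₄} Δ_{α₁α₂α₃α₄}` of Getzler's system,
for a prepotential `F`, a candidate `G`-function `G`, and the (constant) inverse metric
`ηinv`, evaluated at the point `t` and covector `z`. -/
noncomputable def getzlerLHS {n : ℕ} (F G : (Fin n → ℝ) → ℝ)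
    (ηinv : Matrix (Fin n) (Fin n) ℝ) (t z : Fin n → ℝ) : ℝ :=
  let c3 : Fin n → Fin n → Fin n → ℝ :=
    fun μ α β => ∑ ν, ηinv μ ν * pd ν (pd α (pd β F)) t
  let c4 : Fin n → Fin n → Fin n → Fin n → ℝ :=
    fun μ α β γ => ∑ ν, ηinv μ ν * pd ν (pd α (pd β (pd γ F))) t
  let c5 : Fin n → Fin n → Fin n → Fin n → Fin n → ℝ :=
    fun μ α β γ δ => ∑ ν, ηinv μ ν * pd ν (pd α (pd β (pd γ (pd δ F)))) t
  ∑ a1, ∑ a2, ∑ a3, ∑ a4, z a1 * z a2 * z a3 * z a4 *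
    (∑ μ, ∑ ν,
      (3 * c3 μ a1 a2 * c3 ν a3 a4 * pd μ (pd ν G) t
        - 4 * c3 μ a1 a2 * c3 ν a3 μ * pd a4 (pd ν G) t
        - c3 μ a1 a2 * c4 ν a3 a4 μ * pd ν G t
        + 2 * c4 μ a1 a2 a3 * c3 ν a4 μ * pd ν G t
        + (1 / 6) * c4 μ a1 a2 a3 * c4 ν a4 μ ν
        + (1 / 24) * c5 μ a1 a2 a3 a4 * c3 ν μ ν
        - (1 / 4) * c4 μ a1 a2 ν * c4 ν a3 a4 μ))

/-- The prepotential of the Frobenius manifold `ℂ³/W̃⁽¹⁾(A₂)`: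
`F = ½t₁²t₃ + ½t₁t₂² − (1/24)t₂⁴ + t₂ e^{t₃}`. -/
noncomputable def Fa2 : (Fin 3 → ℝ) → ℝ :=
  fun t => (1/2) * (t 0)^2 * t 2 + (1/2) * t 0 * (t 1)^2 - (1/24) * (t 1)^4
    + t 1 * Real.exp (t 2)

/-- The matrix `η` with `η₁₃ = η₃₁ = η₂₂ = 1` and all other entries `0`
(it is its own inverse). -/
def ηA2 : Matrix (Fin 3) (Fin 3) ℝ := !![0, 0, 1; 0, 1, 0; 1, 0, 0]

/-!
Everything is an explicit computation. The third derivatives `∂₀∂_α∂_β F` form the constant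
matrix `η` (with `η⁻¹ = η`), and from order four on only the part `−t₁⁴/24 + t₁ e^{t₂}` of `F`
contributes. Since `G` is linear, its Hessian vanishes and `∂_ν G = −δ_{ν2}/24`, so Getzler's
system becomes a polynomial identity in `z`, `t₁` and `e^{t₂}`, which ring normalisation checks.
(Coordinates are indexed from `0`, so `t 0, t 1, t 2` are the paper's `t₁, t₂, t₃`.)
-/

section PartialDerivative

variable {n : ℕ} {f g : (Fin n → ℝ) → ℝ}

theorem pd_const (i : Fin n) (c : ℝ) : pd i (fun _ => c) = fun _ => 0 := by
  ext t; simp [pd]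

theorem pd_apply (i k : Fin n) : pd i (fun t => t k) = fun _ => if k = i then 1 else 0 := by
  ext t; simp [pd, fderiv_apply, Pi.single_apply]

theorem pd_neg (i : Fin n) : pd i (fun t => -f t) = fun t => -pd i f t := by
  ext t; simp [pd, fderiv_fun_neg]

theorem pd_add (hf : Differentiable ℝ f) (hg : Differentiable ℝ g) (i : Fin n) :
    pd i (fun t => f t + g t) = fun t => pd i f t + pd i g t := by
  ext t; simp [pd, fderiv_fun_add (hf t) (hg t)]

theorem pd_sub (hf : Differentiable ℝ f) (hg : Differentiable ℝ g) (i : Fin n) :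
    pd i (fun t => f t - g t) = fun t => pd i f t - pd i g t := by
  ext t; simp [pd, fderiv_fun_sub (hf t) (hg t)]

theorem pd_mul (hf : Differentiable ℝ f) (hg : Differentiable ℝ g) (i : Fin n) :
    pd i (fun t => f t * g t) = fun t => pd i f t * g t + f t * pd i g t := by
  ext t; simp [pd, fderiv_fun_mul (hf t) (hg t)]; ring

theorem pd_div_const (hf : Differentiable ℝ f) (c : ℝ) (i : Fin n) :
    pd i (fun t => f t / c) = fun t => pd i f t / c := by
  ext t; simp [pd, div_eq_mul_inv, fderiv_mul_const (hf t), mul_comm]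

theorem pd_pow (hf : Differentiable ℝ f) (m : ℕ) (i : Fin n) :
    pd i (fun t => f t ^ m) = fun t => m * f t ^ (m - 1) * pd i f t := by
  ext t; simp [pd, fderiv_fun_pow m (hf t)]

theorem pd_exp (hf : Differentiable ℝ f) (i : Fin n) :
    pd i (fun t => exp (f t)) = fun t => exp (f t) * pd i f t := by
  ext t; simp [pd, fderiv_exp (hf t)]

theorem pd_const_mul_apply (c : ℝ) (i k : Fin n) :
    pd i (fun t => c * t k) = fun _ => if k = i then c else 0 := by
  rw [pd_mul (by fun_prop) (by fun_prop), pd_const, pd_apply]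
  ext t
  simp

end PartialDerivative

-- `dkFa2 t i₁ … iₖ = ∂_{i₁} ⋯ ∂_{iₖ} Fa2 (t)`

noncomputable def d1Fa2 (t : Fin 3 → ℝ) : Fin 3 → ℝ :=
  ![t 0 * t 2 + t 1 ^ 2 / 2, t 0 * t 1 - t 1 ^ 3 / 6 + exp (t 2), t 0 ^ 2 / 2 + t 1 * exp (t 2)]

noncomputable def d2Fa2 (t : Fin 3 → ℝ) : Matrix (Fin 3) (Fin 3) ℝ :=
  !![t 2, t 1, t 0; t 1, t 0 - t 1 ^ 2 / 2, exp (t 2); t 0, exp (t 2), t 1 * exp (t 2)]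

noncomputable def d3Fa2 (t : Fin 3 → ℝ) : Fin 3 → Matrix (Fin 3) (Fin 3) ℝ :=
  ![ηA2,
    !![0, 1, 0; 1, -t 1, 0; 0, 0, exp (t 2)],
    !![1, 0, 0; 0, 0, exp (t 2); 0, exp (t 2), t 1 * exp (t 2)]]

noncomputable def d4Fa2 (t : Fin 3 → ℝ) : Fin 3 → Fin 3 → Matrix (Fin 3) (Fin 3) ℝ :=
  ![0,
    ![0, !![0, 0, 0; 0, -1, 0; 0, 0, 0], !![0, 0, 0; 0, 0, 0; 0, 0, exp (t 2)]],
    ![0, !![0, 0, 0; 0, 0, 0; 0, 0, exp (t 2)],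
      !![0, 0, 0; 0, 0, exp (t 2); 0, exp (t 2), t 1 * exp (t 2)]]]

noncomputable def d5Fa2 (t : Fin 3 → ℝ) : Fin 3 → Fin 3 → Fin 3 → Matrix (Fin 3) (Fin 3) ℝ :=
  ![0,
    ![0, 0, ![0, 0, !![0, 0, 0; 0, 0, 0; 0, 0, exp (t 2)]]],
    ![0, ![0, 0, !![0, 0, 0; 0, 0, 0; 0, 0, exp (t 2)]],
      ![0, !![0, 0, 0; 0, 0, 0; 0, 0, exp (t 2)],
        !![0, 0, 0; 0, 0, exp (t 2); 0, exp (t 2), t 1 * exp (t 2)]]]]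

theorem pd_Fa2 (i : Fin 3) : pd i Fa2 = fun t => d1Fa2 t i := by
  unfold Fa2
  ext t
  fin_cases i <;>
    simp (disch := fun_prop) only [d1Fa2, Fin.zero_eta, Fin.mk_one, Fin.reduceFinMk,
      Matrix.cons_val, pd_add, pd_sub, pd_mul, pd_div_const, pd_pow, pd_exp, pd_const, pd_apply,
      Fin.reduceEq, reduceIte, Nat.cast_ofNat] <;>
    ring

theorem pd_d1Fa2 (i j : Fin 3) : pd i (fun t => d1Fa2 t j) = fun t => d2Fa2 t i j := by
  ext t
  fin_cases i <;> fin_cases j <;>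
    simp (disch := fun_prop) only [d1Fa2, d2Fa2, Fin.zero_eta, Fin.mk_one, Fin.reduceFinMk,
      Matrix.cons_val, Matrix.of_apply, pd_add, pd_sub, pd_mul, pd_div_const, pd_pow, pd_exp,
      pd_apply, Fin.reduceEq, reduceIte, Nat.cast_ofNat] <;>
    ring

theorem pd_d2Fa2 (i j k : Fin 3) : pd i (fun t => d2Fa2 t j k) = fun t => d3Fa2 t i j k := by
  ext t
  fin_cases i <;> fin_cases j <;> fin_cases k <;>
    simp (disch := fun_prop) only [d2Fa2, d3Fa2, ηA2, Fin.zero_eta, Fin.mk_one, Fin.reduceFinMk,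
      Matrix.cons_val, Matrix.of_apply, pd_sub, pd_mul, pd_div_const, pd_pow, pd_exp, pd_apply,
      Fin.reduceEq, reduceIte, Nat.cast_ofNat] <;>
    ring

theorem pd_d3Fa2 (i j k l : Fin 3) :
    pd i (fun t => d3Fa2 t j k l) = fun t => d4Fa2 t i j k l := by
  ext t
  fin_cases i <;> fin_cases j <;> fin_cases k <;> fin_cases l <;>
    simp (disch := fun_prop) only [d3Fa2, d4Fa2, ηA2, Fin.zero_eta, Fin.mk_one, Fin.reduceFinMk,
      Matrix.cons_val, Matrix.of_apply, Pi.zero_apply, Matrix.zero_apply, pd_neg, pd_mul, pd_exp,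
      pd_const, pd_apply, Fin.reduceEq, reduceIte] <;>
    ring

theorem pd_d4Fa2 (i j k l m : Fin 3) :
    pd i (fun t => d4Fa2 t j k l m) = fun t => d5Fa2 t i j k l m := by
  ext t
  fin_cases i <;> fin_cases j <;> fin_cases k <;> fin_cases l <;> fin_cases m <;>
    simp (disch := fun_prop) only [d4Fa2, d5Fa2, Fin.zero_eta, Fin.mk_one, Fin.reduceFinMk,
      Matrix.cons_val, Matrix.of_apply, Pi.zero_apply, Matrix.zero_apply, pd_mul, pd_exp, pd_const,
      pd_apply, Fin.reduceEq, reduceIte] <;>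
    ring

theorem pd_zero_pd_pd_Fa2 (α β : Fin 3) (t : Fin 3 → ℝ) :
    pd 0 (pd α (pd β Fa2)) t = ηA2 α β := by
  simp only [pd_Fa2, pd_d1Fa2, pd_d2Fa2]
  rfl

theorem getzlerLHS_Fa2_eq_zero (t z : Fin 3 → ℝ) :
    getzlerLHS Fa2 (fun t => -(1/24) * t 2) ηA2 t z = 0 := by
  simp only [getzlerLHS, pd_const_mul_apply, pd_const, pd_Fa2, pd_d1Fa2, pd_d2Fa2, pd_d3Fa2,
    pd_d4Fa2]
  simp only [d3Fa2, d4Fa2, d5Fa2, ηA2, Fin.sum_univ_three, Matrix.cons_val, Matrix.of_apply,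
    Pi.zero_apply, Matrix.zero_apply, Fin.isValue, Fin.reduceEq, reduceIte, mul_zero, zero_mul,
    add_zero, zero_add, sub_zero, mul_one, one_mul]
  ring

theorem G_function_tildeW1_A2_general
    (G : (Fin 3 → ℝ) → ℝ) (hG : G = fun t => -(1/24) * t 2) :
    (∀ t : Fin 3 → ℝ, ∀ α β : Fin 3, pd 0 (pd α (pd β Fa2)) t = ηA2 α β) ∧
    (∀ t z : Fin 3 → ℝ, getzlerLHS Fa2 G ηA2 t z = 0) ∧
    (∀ t : Fin 3 → ℝ, pd 0 G t = 0) ∧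
    (∀ t : Fin 3 → ℝ,
      t 0 * pd 0 G t + (1/2) * t 1 * pd 1 G t + (3/2) * pd 2 G t = -(1/16)) := by
  subst hG
  refine ⟨fun t α β => pd_zero_pd_pd_Fa2 α β t, getzlerLHS_Fa2_eq_zero, fun t => ?_, fun t => ?_⟩
  · simp only [pd_const_mul_apply, Fin.reduceEq, reduceIte]
  · simp only [pd_const_mul_apply, Fin.reduceEq, reduceIte]
    norm_num

/-- The `G`-function `G = −t₃/24` of the Frobenius manifold `ℂ³/W̃⁽¹⁾(A₂)`:
the matrix `η_{αβ} = ∂³F/∂t₁∂t_α∂t_β` is the constant matrix `ηA2`, `G` satisfies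
Getzler's system for `F` on `ℝ³`, `∂G/∂t₁ = 0`, and `E(G) = −1/16` for the Euler
vector field `E = t₁∂₁ + ½t₂∂₂ + (3/2)∂₃`. -/
theorem G_function_tildeW1_A2 (r : ℝ) (hr : 0 < r)
    (G : (Fin 3 → ℝ) → ℝ) (hG : G = fun t => -(1/24) * t 2) :
    (∀ t : Fin 3 → ℝ, ∀ α β : Fin 3, pd 0 (pd α (pd β Fa2)) t = ηA2 α β) ∧
    (∀ t z : Fin 3 → ℝ, getzlerLHS Fa2 G ηA2 t z = 0) ∧
    (∀ t : Fin 3 → ℝ, pd 0 G t = 0) ∧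
    (∀ t : Fin 3 → ℝ,
      t 0 * pd 0 G t + (1/2) * t 1 * pd 1 G t + (3/2) * pd 2 G t = -(1/16)) :=
  G_function_tildeW1_A2_general G hG
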